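/- Let Γ ∈ Π_{N,m} be a refined path of boxes of [0,1]², with crossing-interval centers (x_1,y_1),…,(x_{2N−2},y_{2N−2}), and set (x_0,y_0)=(0,0), (x_{2N−1},y_{2N−1})=(1,1). Let ξ be a finite counting measure supported in [0,1]² with no point on any line {x = i/N} or {y = j/N}, i,j ∈ ℤ. Then ℓ(ξ) ≥ Σ_{k=1}^{2N−1} ℓ(ξ↾[x_{k−1},x_k]×[y_{k−1},y_k]). -/

import Mathlib

open MeasureTheory
open scoped ENNReal

/-- A refined path of boxes `Γ ∈ Π_{N,m}`: a staircase sequence of boxes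
`R_N(i_k,j_k)`, `k = 1,…,2N-1`, from `(1,1)` to `(N,N)`, together with choices
`r_k ∈ {1,…,m}` of subintervals of the common edges, monotone along straight runs. -/
structure RefinedPath (N m : ℕ) where
  i : ℕ → ℕ
  j : ℕ → ℕ
  r : ℕ → ℕ
  start_i : i 1 = 1
  start_j : j 1 = 1
  stop_i : i (2 * N - 1) = N
  stop_j : j (2 * N - 1) = N
  step : ∀ k, 1 ≤ k → k ≤ 2 * N - 2 →
    (i (k + 1) = i k + 1 ∧ j (k + 1) = j k) ∨ (i (k + 1) = i k ∧ j (k + 1) = j k + 1)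
  r_mem : ∀ k, 1 ≤ k → k ≤ 2 * N - 2 → 1 ≤ r k ∧ r k ≤ m
  r_mono : ∀ k, 1 ≤ k → k ≤ 2 * N - 3 →
    ((i k = i (k + 1) ∧ i (k + 1) = i (k + 2)) ∨ (j k = j (k + 1) ∧ j (k + 1) = j (k + 2))) →
    r k ≤ r (k + 1)

/-- Center of the `k`-th crossing interval of a refined path. -/
noncomputable def RefinedPath.center {N m : ℕ} (Γ : RefinedPath N m) (k : ℕ) : ℝ × ℝ :=
  if Γ.i (k + 1) = Γ.i k + 1 then
    ((Γ.i k : ℝ) / N, ((Γ.j k : ℝ) - 1) / N + ((Γ.r k : ℝ) - 1 / 2) / (m * N))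
  else
    (((Γ.i k : ℝ) - 1) / N + ((Γ.r k : ℝ) - 1 / 2) / (m * N), (Γ.j k : ℝ) / N)

/-- The centers, extended by the corners `(0,0)` at `k = 0` and `(1,1)` at `k = 2N-1`. -/
noncomputable def RefinedPath.pt {N m : ℕ} (Γ : RefinedPath N m) (k : ℕ) : ℝ × ℝ :=
  if k = 0 then (0, 0) else if k = 2 * N - 1 then (1, 1) else Γ.center k

/-- Record length of a counting measure `ξ` on `ℝ²`. -/
noncomputable def recLenM (ξ : Measure (ℝ × ℝ)) : ℕ :=
  sSup {k : ℕ | ∃ z : Fin k → ℝ × ℝ,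
    (k : ℝ≥0∞) ≤ ξ (Set.range z) ∧
    ∀ i j : Fin k, 0 ≤ ((z i).1 - (z j).1) * ((z i).2 - (z j).2)}

/-! The record length is the largest `ξ`-mass of a chain for the product order on `ℝ²`. If
`a ≤ b ≤ c` and `ξ` has no atom at `b`, a chain in `[a, b]` and a chain in `[b, c]` combine into a
chain in `[a, c]` whose masses add, so the record length is superadditive along consecutive boxes.
The crossing-interval centres increase along the refined path (on straight runs because `r` is
monotone there), and each lies on a grid line, which `ξ` does not charge; telescoping gives the
bound. -/

open Set

theorem Fin.range_append {α : Type*} {m n : ℕ} (u : Fin m → α) (v : Fin n → α) :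
    range (Fin.append u v) = range u ∪ range v := by
  ext x
  constructor
  · rintro ⟨i, rfl⟩
    induction i using Fin.addCases with
    | left i => exact .inl ⟨i, (Fin.append_left u v i).symm⟩
    | right i => exact .inr ⟨i, (Fin.append_right u v i).symm⟩
  · rintro (⟨i, rfl⟩ | ⟨i, rfl⟩)
    · exact ⟨Fin.castAdd n i, Fin.append_left u v i⟩
    · exact ⟨Fin.natAdd m i, Fin.append_right u v i⟩

section ChainLength

variable {α : Type*} [MeasurableSpace α] [Preorder α]

def HasChainOfMass (ξ : Measure α) (k : ℕ) : Prop :=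
  ∃ z : Fin k → α, (k : ℝ≥0∞) ≤ ξ (range z) ∧ IsChain (· ≤ ·) (range z)

noncomputable def chainLength (ξ : Measure α) : ℕ :=
  sSup {k | HasChainOfMass ξ k}

variable {ξ ν : Measure α} {k : ℕ}

theorem hasChainOfMass_zero (ξ : Measure α) : HasChainOfMass ξ 0 :=
  ⟨Fin.elim0, by simp, by simp⟩

theorem HasChainOfMass.mono (h : HasChainOfMass ξ k) (hξν : ξ ≤ ν) : HasChainOfMass ν k :=
  let ⟨z, hz, hchain⟩ := h
  ⟨z, hz.trans (hξν _), hchain⟩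

theorem HasChainOfMass.le_measure_univ (h : HasChainOfMass ξ k) : (k : ℝ≥0∞) ≤ ξ univ :=
  let ⟨_, hz, _⟩ := h
  hz.trans (measure_mono (subset_univ _))

theorem bddAbove_hasChainOfMass (ξ : Measure α) [IsFiniteMeasure ξ] :
    BddAbove {k | HasChainOfMass ξ k} := by
  obtain ⟨n, hn⟩ := ENNReal.exists_nat_gt (measure_ne_top ξ univ)
  exact ⟨n, fun k hk => by exact_mod_cast (hk.le_measure_univ.trans_lt hn).le⟩

theorem hasChainOfMass_chainLength (ξ : Measure α) [IsFiniteMeasure ξ] :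
    HasChainOfMass ξ (chainLength ξ) :=
  Nat.sSup_mem ⟨0, hasChainOfMass_zero ξ⟩ (bddAbove_hasChainOfMass ξ)

theorem HasChainOfMass.le_chainLength [IsFiniteMeasure ξ] (h : HasChainOfMass ξ k) :
    k ≤ chainLength ξ :=
  le_csSup (bddAbove_hasChainOfMass ξ) h

theorem chainLength_mono [IsFiniteMeasure ν] (h : ξ ≤ ν) : chainLength ξ ≤ chainLength ν :=
  have := isFiniteMeasure_of_le ν h
  ((hasChainOfMass_chainLength ξ).mono h).le_chainLength

end ChainLength

section Concatenation

variable {α : Type*} [MeasurableSpace α] [Lattice α] [MeasurableSingletonClass α]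
  {ξ : Measure α} {a b c : α} {k₁ k₂ : ℕ}

/-- Truncating the first chain by `· ⊓ b` and the second by `b ⊔ ·` fixes their points inside
the boxes and puts the first below the second; the two boxes overlap only in the null set `{b}`. -/
theorem HasChainOfMass.restrict_Icc_append (hab : a ≤ b) (hbc : b ≤ c) (hb : ξ {b} = 0)
    (h₁ : HasChainOfMass (ξ.restrict (Icc a b)) k₁)
    (h₂ : HasChainOfMass (ξ.restrict (Icc b c)) k₂) :
    HasChainOfMass (ξ.restrict (Icc a c)) (k₁ + k₂) := by
  obtain ⟨z₁, hz₁, hchain₁⟩ := h₁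
  obtain ⟨z₂, hz₂, hchain₂⟩ := h₂
  set w₁ : Fin k₁ → α := (· ⊓ b) ∘ z₁
  set w₂ : Fin k₂ → α := (b ⊔ ·) ∘ z₂
  set S₁ := range z₁ ∩ Icc a b
  set S₂ := range z₂ ∩ Icc b c
  have hS₁ : S₁ ⊆ range (Fin.append w₁ w₂) ∩ Icc a c := by
    rintro _ ⟨⟨i, rfl⟩, hi⟩
    refine ⟨Fin.range_append w₁ w₂ ▸ .inl ⟨i, inf_eq_left.2 hi.2⟩, hi.1, hi.2.trans hbc⟩
  have hS₂ : S₂ ⊆ range (Fin.append w₁ w₂) ∩ Icc a c := by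
    rintro _ ⟨⟨i, rfl⟩, hi⟩
    refine ⟨Fin.range_append w₁ w₂ ▸ .inr ⟨i, sup_eq_right.2 hi.1⟩, hab.trans hi.1, hi.2⟩
  have hS₁₂ : ξ (S₁ ∩ S₂) = 0 :=
    measure_mono_null (fun x hx => le_antisymm hx.1.2.2 hx.2.2.1) hb
  rw [Measure.restrict_apply (finite_range _).measurableSet] at hz₁ hz₂
  refine ⟨Fin.append w₁ w₂, ?_, ?_⟩
  · rw [Measure.restrict_apply (finite_range _).measurableSet]
    calc ((k₁ + k₂ : ℕ) : ℝ≥0∞) ≤ ξ S₁ + ξ S₂ := by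
          push_cast
          exact add_le_add hz₁ hz₂
      _ = ξ (S₁ ∪ S₂) := by
          rw [← measure_union_add_inter S₁ ((finite_range z₂).inter_of_left _).measurableSet,
            hS₁₂, add_zero]
      _ ≤ _ := measure_mono (union_subset hS₁ hS₂)
  · rw [Fin.range_append, isChain_union, range_comp, range_comp]
    refine ⟨(monotone_id.inf monotone_const).isChain_image hchain₁,
      (monotone_const.sup monotone_id).isChain_image hchain₂, ?_⟩
    rintro _ ⟨x, -, rfl⟩ _ ⟨y, -, rfl⟩ -
    exact .inl (inf_le_right.trans le_sup_left)

theorem chainLength_restrict_Icc_add_le [IsFiniteMeasure ξ] (hab : a ≤ b) (hbc : b ≤ c)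
    (hb : ξ {b} = 0) :
    chainLength (ξ.restrict (Icc a b)) + chainLength (ξ.restrict (Icc b c)) ≤
      chainLength (ξ.restrict (Icc a c)) :=
  ((hasChainOfMass_chainLength _).restrict_Icc_append hab hbc hb
    (hasChainOfMass_chainLength _)).le_chainLength

theorem sum_chainLength_restrict_Icc_le [IsFiniteMeasure ξ] {p : ℕ → α} {K : ℕ}
    (hp : ∀ k < K, p k ≤ p (k + 1)) (hnull : ∀ k < K, ξ {p k} = 0) :
    ∑ k ∈ Finset.Icc 1 K, chainLength (ξ.restrict (Icc (p (k - 1)) (p k))) ≤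
      chainLength (ξ.restrict (Icc (p 0) (p K))) := by
  induction K with
  | zero => simp
  | succ K ih =>
    have hp₀ : p 0 ≤ p K :=
      monotoneOn_of_le_succ ordConnected_Iic
        (fun k _ _ hk => (Order.succ_eq_add_one k).symm ▸ hp k (by simp at hk; omega))
        (Nat.zero_le K) le_rfl (Nat.zero_le K)
    rw [Finset.sum_Icc_succ_top (Nat.le_add_left 1 K), Nat.add_sub_cancel]
    calc _ ≤ chainLength (ξ.restrict (Icc (p 0) (p K))) +
          chainLength (ξ.restrict (Icc (p K) (p (K + 1)))) := by
          gcongr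
          exact ih (fun k hk => hp k (by omega)) (fun k hk => hnull k (by omega))
      _ ≤ _ := chainLength_restrict_Icc_add_le hp₀ (hp K K.lt_succ_self) (hnull K K.lt_succ_self)

end Concatenation

theorem sub_mul_sub_nonneg_iff_le_or_le {x y : ℝ × ℝ} :
    0 ≤ (x.1 - y.1) * (x.2 - y.2) ↔ x ≤ y ∨ y ≤ x := by
  rw [mul_nonneg_iff, Prod.le_def, Prod.le_def, sub_nonneg, sub_nonneg, sub_nonpos, sub_nonpos]
  tauto

theorem isChain_range_iff {α ι : Type*} [Preorder α] {z : ι → α} :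
    IsChain (· ≤ ·) (range z) ↔ ∀ i j, z i ≤ z j ∨ z j ≤ z i :=
  ⟨fun h i j => h.total (mem_range_self i) (mem_range_self j),
    by rintro h _ ⟨i, rfl⟩ _ ⟨j, rfl⟩ -; exact h i j⟩

theorem recLenM_eq_chainLength (ξ : Measure (ℝ × ℝ)) : recLenM ξ = chainLength ξ := by
  simp only [recLenM, chainLength, HasChainOfMass, isChain_range_iff,
    sub_mul_sub_nonneg_iff_le_or_le]

namespace RefinedPath

variable {N m : ℕ} (Γ : RefinedPath N m) {k : ℕ}

noncomputable def offset (k : ℕ) : ℝ := ((Γ.r k : ℝ) - 1 / 2) / (m * N)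

theorem center_of_step_right (h : Γ.i (k + 1) = Γ.i k + 1) :
    Γ.center k = ((Γ.i k : ℝ) / N, ((Γ.j k : ℝ) - 1) / N + Γ.offset k) :=
  if_pos h

theorem center_of_step_up (h : Γ.i (k + 1) = Γ.i k) :
    Γ.center k = (((Γ.i k : ℝ) - 1) / N + Γ.offset k, (Γ.j k : ℝ) / N) :=
  if_neg (by omega)

theorem pt_eq_center (hk₁ : 1 ≤ k) (hk₂ : k ≤ 2 * N - 2) : Γ.pt k = Γ.center k :=
  (if_neg (by omega)).trans (if_neg (by omega))

theorem offset_nonneg (hk₁ : 1 ≤ k) (hk₂ : k ≤ 2 * N - 2) : 0 ≤ Γ.offset k := by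
  have : (1 : ℝ) ≤ Γ.r k := by exact_mod_cast (Γ.r_mem k hk₁ hk₂).1
  exact div_nonneg (by linarith) (by positivity)

theorem offset_le (hk₁ : 1 ≤ k) (hk₂ : k ≤ 2 * N - 2) : Γ.offset k ≤ 1 / N := by
  obtain ⟨hr₁, hr₂⟩ := Γ.r_mem k hk₁ hk₂
  have : (Γ.r k : ℝ) ≤ m := by exact_mod_cast hr₂
  rw [offset, ← div_div]
  gcongr
  exact div_le_one_of_le₀ (by linarith) (by positivity)

theorem offset_mono (h : Γ.r k ≤ Γ.r (k + 1)) : Γ.offset k ≤ Γ.offset (k + 1) := by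
  unfold offset
  gcongr

theorem lowerCorner_le_center (hk₁ : 1 ≤ k) (hk₂ : k ≤ 2 * N - 2) :
    (((Γ.i k : ℝ) - 1) / N, ((Γ.j k : ℝ) - 1) / N) ≤ Γ.center k := by
  have := Γ.offset_nonneg hk₁ hk₂
  have := Γ.offset_le hk₁ hk₂
  rcases Γ.step k hk₁ hk₂ with ⟨hi, -⟩ | ⟨hi, -⟩
  · rw [center_of_step_right _ hi]
    constructor <;> simp only [sub_div] <;> linarith
  · rw [center_of_step_up _ hi]
    constructor <;> simp only [sub_div] <;> linarith

theorem center_le_upperCorner (hk₁ : 1 ≤ k) (hk₂ : k ≤ 2 * N - 2) :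
    Γ.center k ≤ ((Γ.i (k + 1) : ℝ) / N, (Γ.j (k + 1) : ℝ) / N) := by
  have := Γ.offset_nonneg hk₁ hk₂
  have := Γ.offset_le hk₁ hk₂
  rcases Γ.step k hk₁ hk₂ with ⟨hi, hj⟩ | ⟨hi, hj⟩
  · rw [center_of_step_right _ hi, hi, hj]
    constructor <;> push_cast <;> simp only [sub_div, add_div] <;> linarith
  · rw [center_of_step_up _ hi, hi, hj]
    constructor <;> push_cast <;> simp only [sub_div, add_div] <;> linarith

/-- Consecutive crossing points are ordered: on a turn they lie on perpendicular edges of the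
same box, and on a straight run the monotonicity of `r` orders them. -/
theorem center_le_center_succ (hk₁ : 1 ≤ k) (hk₂ : k + 1 ≤ 2 * N - 2) :
    Γ.center k ≤ Γ.center (k + 1) := by
  have := Γ.offset_nonneg hk₁ (by omega)
  have := Γ.offset_le hk₁ (by omega)
  have := Γ.offset_nonneg (by omega) hk₂
  have := Γ.offset_le (by omega) hk₂
  rcases Γ.step k hk₁ (by omega) with ⟨hi, hj⟩ | ⟨hi, hj⟩ <;>
    rcases Γ.step (k + 1) (by omega) hk₂ with ⟨hi', hj'⟩ | ⟨hi', hj'⟩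
  · have := Γ.offset_mono (Γ.r_mono k hk₁ (by omega) (.inr ⟨hj.symm, hj'.symm⟩))
    rw [center_of_step_right _ hi, center_of_step_right _ hi', hi, hj]
    constructor <;> push_cast <;> simp only [sub_div, add_div] <;> linarith
  · rw [center_of_step_right _ hi, center_of_step_up _ hi', hi, hj]
    constructor <;> push_cast <;> simp only [sub_div, add_div] <;> linarith
  · rw [center_of_step_up _ hi, center_of_step_right _ hi', hi, hj]
    constructor <;> push_cast <;> simp only [sub_div, add_div] <;> linarith
  · have := Γ.offset_mono (Γ.r_mono k hk₁ (by omega) (.inl ⟨hi.symm, hi'.symm⟩))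
    rw [center_of_step_up _ hi, center_of_step_up _ hi', hi, hj]
    constructor <;> push_cast <;> simp only [sub_div, add_div] <;> linarith

theorem pt_le_pt_succ (hk : k < 2 * N - 1) : Γ.pt k ≤ Γ.pt (k + 1) := by
  have hpt₀ : Γ.pt 0 = (0, 0) := if_pos rfl
  have hpt_last : Γ.pt (2 * N - 1) = (1, 1) := (if_neg (by omega)).trans (if_pos rfl)
  rcases Nat.eq_zero_or_pos k with rfl | hk₁
  · obtain hN | hN := eq_or_lt_of_le (show 1 ≤ N by omega)
    · subst hN
      rw [hpt₀, hpt_last]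
      exact ⟨zero_le_one, zero_le_one⟩
    rw [hpt₀, Γ.pt_eq_center le_rfl (by omega)]
    simpa [Γ.start_i, Γ.start_j] using Γ.lowerCorner_le_center le_rfl (by omega)
  rw [Γ.pt_eq_center hk₁ (by omega)]
  obtain hk₂ | hk₂ := eq_or_lt_of_le (show k + 1 ≤ 2 * N - 1 by omega)
  · have hN : (N : ℝ) ≠ 0 := Nat.cast_ne_zero.2 (by omega)
    have := Γ.center_le_upperCorner hk₁ (by omega)
    rw [hk₂, hpt_last]
    rwa [hk₂, Γ.stop_i, Γ.stop_j, div_self hN] at this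
  · rw [Γ.pt_eq_center (by omega) (by omega)]
    exact Γ.center_le_center_succ hk₁ (by omega)

theorem exists_pt_eq_div (k : ℕ) : ∃ t : ℤ, (Γ.pt k).1 = t / N ∨ (Γ.pt k).2 = t / N := by
  by_cases hk₀ : k = 0
  · exact ⟨0, .inl (by simp [pt, hk₀])⟩
  by_cases hk : k = 2 * N - 1
  · have hN : (N : ℝ) ≠ 0 := Nat.cast_ne_zero.2 (by omega)
    refine ⟨N, .inl ?_⟩
    rw [pt, if_neg hk₀, if_pos hk, Int.cast_natCast, div_self hN]
  rw [pt, if_neg hk₀, if_neg hk, center]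
  split_ifs
  · exact ⟨Γ.i k, .inl (by push_cast; rfl)⟩
  · exact ⟨Γ.j k, .inr (by push_cast; rfl)⟩

end RefinedPath

theorem recLen_ge_path_sum_general (N m : ℕ) (Γ : RefinedPath N m)
    (M : ℕ) (z : Fin M → ℝ × ℝ)
    (hgrid : ∀ a : Fin M, ∀ t : ℤ, (z a).1 ≠ (t : ℝ) / N ∧ (z a).2 ≠ (t : ℝ) / N) :
    ∑ k ∈ Finset.Icc 1 (2 * N - 1),
        recLenM ((∑ a : Fin M, Measure.dirac (z a)).restrict
          (Set.Icc (Γ.pt (k - 1)) (Γ.pt k)))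
      ≤ recLenM (∑ a : Fin M, Measure.dirac (z a)) := by
  set ξ := ∑ a : Fin M, Measure.dirac (z a)
  have hnull (k : ℕ) : ξ {Γ.pt k} = 0 := by
    obtain ⟨t, ht⟩ := Γ.exists_pt_eq_div k
    have hz (a : Fin M) : z a ≠ Γ.pt k := by
      intro h
      rw [← h] at ht
      exact ht.elim (hgrid a t).1 (hgrid a t).2
    simp [ξ, Measure.finsetSum_apply, hz]
  simp only [recLenM_eq_chainLength]
  calc _ ≤ chainLength (ξ.restrict (Icc (Γ.pt 0) (Γ.pt (2 * N - 1)))) :=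
        sum_chainLength_restrict_Icc_le (fun k hk => Γ.pt_le_pt_succ hk) (fun k _ => hnull k)
    _ ≤ chainLength ξ := chainLength_mono Measure.restrict_le_self

/-- Lower bound for the record length along a refined path of boxes: the record length of
`ξ` is at least the sum over the path of the record lengths of the restrictions of `ξ` to the
rectangles spanned by consecutive crossing-interval centers. -/
theorem recLen_ge_path_sum (N m : ℕ) (Γ : RefinedPath N m)
    (M : ℕ) (z : Fin M → ℝ × ℝ)
    (hsupp : ∀ a : Fin M, z a ∈ Set.Icc ((0 : ℝ), (0 : ℝ)) (1, 1))
    (hgrid : ∀ a : Fin M, ∀ t : ℤ, (z a).1 ≠ (t : ℝ) / N ∧ (z a).2 ≠ (t : ℝ) / N) :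
    ∑ k ∈ Finset.Icc 1 (2 * N - 1),
        recLenM ((∑ a : Fin M, Measure.dirac (z a)).restrict
          (Set.Icc (Γ.pt (k - 1)) (Γ.pt k)))
      ≤ recLenM (∑ a : Fin M, Measure.dirac (z a)) :=
  recLen_ge_path_sum_general N m Γ M z hgrid
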